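/- arXiv:2110.12662 — 4 statements merged into one kernel-verified Lean document; each statement's English description precedes it below -/
import Mathlib

section
/- Let x₁, …, x_N ∈ ℝⁿ be N points, and let K = |{i : x_i ∉ R}| be the number of points lying outside the polytope R. For 0 ≤ j < N let λ*_j = max(0, v_{j+1}) denote the optimal value of the scenario program after discarding the j points with the largest gauge values, where v_{j+1} is the (j+1)-th largest element of {g(x₁), …, g(x_N)}. Then: (i) if K < N, λ*_K ≤ 1 and hence R(λ*_K) ⊆ R; and (ii) if K ≥ 1, λ*_{K−1} > 1 and hence R is a strict subset of R(λ*_{K−1}). -/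
/-- The `j`-th largest value (1-indexed, counted with multiplicity) among the
values `v 0, …, v (N-1)`. -/
noncomputable def kthLargest {N : ℕ} (v : Fin N → ℝ) (j : ℕ) : ℝ :=
  (List.insertionSort (· ≥ ·) (List.ofFn v)).getD (j - 1) 0

private lemma countP_ofFn_eq_card {N : ℕ} (v : Fin N → ℝ) (p : ℝ → Prop) [DecidablePred p] :
    (List.ofFn v).countP (fun a => decide (p a)) =
      (Finset.univ.filter (fun i => p (v i))).card := by
  rw [List.ofFn_eq_map, List.countP_map, Finset.card_def, Finset.filter_val, Fin.univ_def,
    ← Multiset.countP_eq_card_filter]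
  simp [Multiset.coe_countP]
  rfl

private lemma sorted_ge_getElem_le {l : List ℝ} (hs : l.Pairwise (· ≥ ·))
    {i j : ℕ} (hij : i ≤ j) (hj : j < l.length) :
    l[j] ≤ l[i]'(lt_of_le_of_lt hij hj) := by
  rcases eq_or_lt_of_le hij with rfl | hlt
  · exact le_refl _
  · exact (List.pairwise_iff_getElem.mp hs) i j _ hj hlt

private lemma countP_ge_of_sorted {l : List ℝ} (hs : l.Pairwise (· ≥ ·))
    {k : ℕ} (hk : k < l.length) (h : 1 < l[k]) :
    k + 1 ≤ l.countP (fun a => decide (1 < a)) := by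
  have hsub : (l.take (k + 1)).Sublist l := List.take_sublist _ _
  have hall : ∀ a ∈ l.take (k + 1), 1 < a := by
    intro a ha
    obtain ⟨i, hi, rfl⟩ := List.mem_iff_getElem.mp ha
    have hi' : i < k + 1 := lt_of_lt_of_le hi (by simp [List.length_take])
    have hil : i < l.length := lt_of_lt_of_le hi (by simp [List.length_take])
    rw [List.getElem_take]
    exact lt_of_lt_of_le h (sorted_ge_getElem_le hs (Nat.lt_succ_iff.mp hi') hk)
  have hcnt : (l.take (k + 1)).countP (fun a => decide (1 < a)) = (l.take (k + 1)).length :=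
    List.countP_eq_length.mpr (by intro a ha; simpa using hall a ha)
  have hlen : (l.take (k + 1)).length = k + 1 := by
    simp [List.length_take]; omega
  calc k + 1 = (l.take (k + 1)).countP (fun a => decide (1 < a)) := by rw [hcnt, hlen]
    _ ≤ l.countP (fun a => decide (1 < a)) := hsub.countP_le

private lemma countP_le_of_sorted {l : List ℝ} (hs : l.Pairwise (· ≥ ·))
    {k : ℕ} (hk : k < l.length) (h : l[k] ≤ 1) :
    l.countP (fun a => decide (1 < a)) ≤ k := by
  have hsplit : l = l.take k ++ l.drop k := (List.take_append_drop k l).symm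
  have hdrop : (l.drop k).countP (fun a => decide (1 < a)) = 0 := by
    rw [List.countP_eq_zero]
    intro a ha
    obtain ⟨i, hi, rfl⟩ := List.mem_iff_getElem.mp ha
    rw [List.getElem_drop]
    simp only [decide_eq_true_eq, not_lt]
    exact le_trans (sorted_ge_getElem_le hs (Nat.le_add_right k i) _) h
  calc l.countP (fun a => decide (1 < a))
      = (l.take k).countP (fun a => decide (1 < a))
        + (l.drop k).countP (fun a => decide (1 < a)) := by
        conv_lhs => rw [hsplit]
        rw [List.countP_append]
    _ = (l.take k).countP (fun a => decide (1 < a)) := by rw [hdrop, Nat.add_zero]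
    _ ≤ (l.take k).length := List.countP_le_length
    _ ≤ k := by simp [List.length_take]

open scoped Classical in
/-- With `K` the number of sample points outside the polytope `R`
and `λ*_j = max(0, v_{j+1})` (`v_{j+1}` the `(j+1)`-th largest gauge value), we have:
(i) if `K < N` then `λ*_K ≤ 1` and `R(λ*_K) ⊆ R`; (ii) if `K ≥ 1` then
`λ*_{K−1} > 1` and `R ⊊ R(λ*_{K−1})`. -/
theorem scenario_discard_under_over_approx {n m : ℕ} (hn : 1 ≤ n) (hm : 1 ≤ m)
    (M : Matrix (Fin m) (Fin n) ℝ) (b : Fin m → ℝ) (c : Fin n → ℝ)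
    (hc : ∀ j, M.mulVec c j < b j)
    (N : ℕ) (hN : 1 ≤ N) (x : Fin N → (Fin n → ℝ))
    (g : (Fin n → ℝ) → ℝ)
    (hg : ∀ y, g y = Finset.univ.sup' ⟨⟨0, hm⟩, Finset.mem_univ _⟩
        fun j => M.mulVec (y - c) j / (b j - M.mulVec c j))
    (K : ℕ)
    (hK : K = (Finset.univ.filter fun i =>
        x i ∉ {y : Fin n → ℝ | ∀ j, M.mulVec y j ≤ b j}).card) :
    (K < N →
      max 0 (kthLargest (fun i => g (x i)) (K + 1)) ≤ 1 ∧
      {y : Fin n → ℝ | ∀ j, M.mulVec (y - c) j ≤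
          max 0 (kthLargest (fun i => g (x i)) (K + 1)) * (b j - M.mulVec c j)} ⊆
        {y : Fin n → ℝ | ∀ j, M.mulVec y j ≤ b j}) ∧
    (1 ≤ K →
      1 < max 0 (kthLargest (fun i => g (x i)) (K - 1 + 1)) ∧
      {y : Fin n → ℝ | ∀ j, M.mulVec y j ≤ b j} ⊂
        {y : Fin n → ℝ | ∀ j, M.mulVec (y - c) j ≤
          max 0 (kthLargest (fun i => g (x i)) (K - 1 + 1)) * (b j - M.mulVec c j)}) := by
  classical
  set v : Fin N → ℝ := fun i => g (x i) with hv
  set L : List ℝ := List.insertionSort (· ≥ ·) (List.ofFn v) with hLdef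
  have hdpos : ∀ j, 0 < b j - M.mulVec c j := fun j => sub_pos.2 (hc j)
  have hperm : L.Perm (List.ofFn v) := List.perm_insertionSort _ _
  have hlen : L.length = N := by rw [hperm.length_eq, List.length_ofFn]
  have hsort : L.Pairwise (· ≥ ·) := List.pairwise_insertionSort _ _
  have hMy : ∀ (y : Fin n → ℝ) (j : Fin m),
      M.mulVec (y - c) j = M.mulVec y j - M.mulVec c j := by
    intro y j
    rw [Matrix.mulVec_sub]
    rfl
  -- the gauge dominates each scaled constraint
  have hgle : ∀ (y : Fin n → ℝ) (j : Fin m),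
      M.mulVec (y - c) j ≤ g y * (b j - M.mulVec c j) := by
    intro y j
    have h1 : M.mulVec (y - c) j / (b j - M.mulVec c j) ≤ g y := by
      rw [hg]
      exact Finset.le_sup' (fun j => M.mulVec (y - c) j / (b j - M.mulVec c j))
        (Finset.mem_univ j)
    calc M.mulVec (y - c) j
        = (M.mulVec (y - c) j / (b j - M.mulVec c j)) * (b j - M.mulVec c j) := by
          rw [div_mul_cancel₀ _ (hdpos j).ne']
      _ ≤ g y * (b j - M.mulVec c j) := mul_le_mul_of_nonneg_right h1 (hdpos j).le
  -- being outside R is the same as gauge > 1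
  have hout : ∀ i : Fin N,
      (x i ∉ {y : Fin n → ℝ | ∀ j, M.mulVec y j ≤ b j}) ↔ 1 < v i := by
    intro i
    simp only [Set.mem_setOf_eq, not_forall, not_le]
    constructor
    · rintro ⟨j, hj⟩
      have hr : 1 < M.mulVec (x i - c) j / (b j - M.mulVec c j) := by
        rw [lt_div_iff₀ (hdpos j), one_mul, hMy]
        linarith
      have : M.mulVec (x i - c) j / (b j - M.mulVec c j) ≤ v i := by
        rw [hv]; simp only; rw [hg]
        exact Finset.le_sup' (fun j => M.mulVec (x i - c) j / (b j - M.mulVec c j))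
          (Finset.mem_univ j)
      linarith
    · intro h
      rw [hv] at h; simp only at h; rw [hg] at h
      obtain ⟨j, _, hj⟩ := (Finset.lt_sup'_iff _).mp h
      refine ⟨j, ?_⟩
      rw [lt_div_iff₀ (hdpos j), one_mul, hMy] at hj
      linarith
  -- K equals the count of gauge values > 1 in L
  have hcount : L.countP (fun a => decide (1 < a)) = K := by
    rw [hperm.countP_eq, countP_ofFn_eq_card v (fun a => 1 < a), hK]
    congr 1
    apply Finset.filter_congr
    intro i _
    exact (hout i).symm
  have hKN : K ≤ N := by
    rw [hK]
    calc (Finset.univ.filter _).card ≤ Finset.univ.card := Finset.card_filter_le _ _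
      _ = N := by simp
  constructor
  · -- Part (i)
    intro hKltN
    have hKL : K < L.length := by rw [hlen]; exact hKltN
    have hgetD : kthLargest v (K + 1) = L[K] := by
      rw [kthLargest, Nat.add_sub_cancel, ← hLdef, List.getD_eq_getElem _ _ hKL]
    have hle1 : L[K] ≤ 1 := by
      by_contra hlt
      push_neg at hlt
      have := countP_ge_of_sorted hsort hKL hlt
      omega
    have hmaxle : max 0 (kthLargest v (K + 1)) ≤ 1 := by
      rw [hgetD]
      exact max_le zero_le_one hle1
    refine ⟨hmaxle, ?_⟩
    intro y hy
    simp only [Set.mem_setOf_eq] at hy ⊢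
    intro j
    have h1 := hy j
    have h2 : max 0 (kthLargest v (K + 1)) * (b j - M.mulVec c j) ≤ b j - M.mulVec c j :=
      mul_le_of_le_one_left (hdpos j).le hmaxle
    have h3 := hMy y j
    linarith
  · -- Part (ii)
    intro hK1
    have hK1L : K - 1 < L.length := by rw [hlen]; omega
    have hgetD : kthLargest v (K - 1 + 1) = L[K - 1] := by
      rw [kthLargest, Nat.add_sub_cancel, ← hLdef, List.getD_eq_getElem _ _ hK1L]
    have hgt1 : 1 < L[K - 1] := by
      by_contra hle
      push_neg at hle
      have := countP_le_of_sorted hsort hK1L hle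
      omega
    have hmax : max 0 (kthLargest v (K - 1 + 1)) = L[K - 1] := by
      rw [hgetD]
      exact max_eq_right (le_trans zero_le_one hgt1.le)
    refine ⟨by rw [hmax]; exact hgt1, ?_⟩
    -- witness: a sample point attaining the (K)-th largest gauge value
    have hmem : L[K - 1] ∈ List.ofFn v := hperm.mem_iff.mp (List.getElem_mem hK1L)
    obtain ⟨i, hi⟩ : ∃ i, v i = L[K - 1] := by
      rw [List.mem_ofFn] at hmem
      exact hmem
    rw [Set.ssubset_def]
    constructor
    · intro y hy
      simp only [Set.mem_setOf_eq] at hy ⊢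
      intro j
      have h1 := hy j
      have h2 : b j - M.mulVec c j ≤
          max 0 (kthLargest v (K - 1 + 1)) * (b j - M.mulVec c j) := by
        apply le_mul_of_one_le_left (hdpos j).le
        rw [hmax]; exact hgt1.le
      have h3 := hMy y j
      linarith
    · intro hcontra
      have hxin : x i ∈ {y : Fin n → ℝ | ∀ j, M.mulVec (y - c) j ≤
          max 0 (kthLargest v (K - 1 + 1)) * (b j - M.mulVec c j)} := by
        simp only [Set.mem_setOf_eq]
        intro j
        rw [hmax, ← hi]
        exact hgle (x i) j
      have hxout : x i ∉ {y : Fin n → ℝ | ∀ j, M.mulVec y j ≤ b j} := by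
        rw [hout i, hi]
        exact hgt1
      exact hxout (hcontra hxin)
end

section
/- Let ν be an atomless Borel probability measure on ℝ, let N ≥ 1, let V₁, …, V_N be the coordinate projections on (ℝ^N, ν^N) (i.e., N i.i.d. random variables with law ν), and let 0 ≤ k < N. Let V_{(k+1)} denote the (k+1)-th largest value among V₁, …, V_N, and let F̄(t) = ν((t, ∞)). Then for every ε ∈ [0,1], ν^N { F̄(V_{(k+1)}) ≤ ε } = Σ_{i=k+1}^{N} binom(N,i) ε^i (1−ε)^{N−i} = 1 − Σ_{i=0}^{k} binom(N,i) ε^i (1−ε)^{N−i}. -/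
open MeasureTheory

/-- The measure of the "survival set" `{x | ν((x,∞)).toReal ≤ ε}` is exactly `ε`. -/
lemma aux_measure_A (ν : Measure ℝ) [IsProbabilityMeasure ν] (hatom : ∀ t : ℝ, ν {t} = 0)
    {ε : ℝ} (hε : ε ∈ Set.Icc (0:ℝ) 1) :
    ν {x : ℝ | (ν (Set.Ioi x)).toReal ≤ ε} = ENNReal.ofReal ε := by
  set A := {x : ℝ | (ν (Set.Ioi x)).toReal ≤ ε} with hA
  have hup : ∀ x ∈ A, ∀ y, x ≤ y → y ∈ A := by
    intro x hx y hxy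
    simp only [hA, Set.mem_setOf_eq] at hx ⊢
    exact le_trans
      (ENNReal.toReal_mono (measure_ne_top ν _) (measure_mono (Set.Ioi_subset_Ioi hxy))) hx
  rcases Set.eq_empty_or_nonempty A with h | h
  · -- A empty, show ε = 0
    have htend : Filter.Tendsto (fun n : ℕ => ν (Set.Ioi (n:ℝ))) Filter.atTop
        (nhds (ν (⋂ n : ℕ, Set.Ioi (n:ℝ)))) := by
      refine tendsto_measure_iInter_atTop (fun n => measurableSet_Ioi.nullMeasurableSet) ?_
        ⟨0, measure_ne_top _ _⟩
      intro a b hab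
      exact Set.Ioi_subset_Ioi (by exact_mod_cast hab)
    have hempty : (⋂ n : ℕ, Set.Ioi (n:ℝ)) = ∅ := by
      ext x
      simp only [Set.mem_iInter, Set.mem_Ioi, Set.mem_empty_iff_false, iff_false, not_forall,
        not_lt]
      obtain ⟨n, hn⟩ := exists_nat_ge x
      exact ⟨n, hn⟩
    rw [hempty, measure_empty] at htend
    have htr : Filter.Tendsto (fun n : ℕ => (ν (Set.Ioi (n:ℝ))).toReal) Filter.atTop (nhds 0) := by
      simpa [Function.comp_def] using (ENNReal.tendsto_toReal (by simp)).comp htend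
    have hle : ε ≤ 0 := by
      refine ge_of_tendsto htr (Filter.Eventually.of_forall fun n => ?_)
      have hn : (n:ℝ) ∉ A := by rw [h]; exact Set.notMem_empty _
      simp only [hA, Set.mem_setOf_eq, not_le] at hn
      exact hn.le
    have : ε = 0 := le_antisymm hle hε.1
    rw [h, this]; simp
  · by_cases hbd : BddBelow A
    · set c := sInf A with hc
      have hIoi : Set.Ioi c ⊆ A := by
        intro y hy
        obtain ⟨x, hxA, hxy⟩ := (csInf_lt_iff hbd h).mp hy
        exact hup x hxA y hxy.le
      have hIci : A ⊆ Set.Ici c := fun x hx => csInf_le hbd hx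
      have hIciIoi : ν (Set.Ici c) = ν (Set.Ioi c) := by
        refine le_antisymm ?_ (measure_mono Set.Ioi_subset_Ici_self)
        rw [← Set.Ioi_union_left]
        calc ν (Set.Ioi c ∪ {c}) ≤ ν (Set.Ioi c) + ν {c} := measure_union_le _ _
          _ = ν (Set.Ioi c) := by rw [hatom c, add_zero]
      have hAIoi : ν A = ν (Set.Ioi c) :=
        le_antisymm (le_trans (measure_mono hIci) hIciIoi.le) (measure_mono hIoi)
      have hub : (ν (Set.Ioi c)).toReal ≤ ε := by
        have htend : Filter.Tendsto (fun n : ℕ => ν (Set.Ioi (c + 1/(n+1)))) Filter.atTop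
            (nhds (ν (⋃ n : ℕ, Set.Ioi (c + 1/(n+1))))) := by
          refine tendsto_measure_iUnion_atTop ?_
          intro a b hab
          refine Set.Ioi_subset_Ioi ?_
          have hcast : (a:ℝ) ≤ b := by exact_mod_cast hab
          gcongr
        have hun : (⋃ n : ℕ, Set.Ioi (c + 1/(n+1))) = Set.Ioi c := by
          ext x
          simp only [Set.mem_iUnion, Set.mem_Ioi]
          constructor
          · rintro ⟨n, hn⟩
            have h0 : (0:ℝ) < 1/(n+1) := by positivity
            linarith
          · intro hx
            obtain ⟨n, hn⟩ := exists_nat_one_div_lt (show (0:ℝ) < x - c by linarith)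
            exact ⟨n, by linarith⟩
        rw [hun] at htend
        have htr : Filter.Tendsto (fun n : ℕ => (ν (Set.Ioi (c + 1/(n+1)))).toReal) Filter.atTop
            (nhds ((ν (Set.Ioi c)).toReal)) :=
          (ENNReal.tendsto_toReal (measure_ne_top _ _)).comp htend
        refine le_of_tendsto htr (Filter.Eventually.of_forall fun n => ?_)
        have h0 : (0:ℝ) < 1/((n:ℝ)+1) := by positivity
        have hmem : c + 1/((n:ℝ)+1) ∈ A := hIoi (by simp only [Set.mem_Ioi]; linarith)
        simpa only [hA, Set.mem_setOf_eq] using hmem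
      have hlb : ε ≤ (ν (Set.Ioi c)).toReal := by
        have htend : Filter.Tendsto (fun n : ℕ => ν (Set.Ioi (c - 1/(n+1)))) Filter.atTop
            (nhds (ν (⋂ n : ℕ, Set.Ioi (c - 1/(n+1))))) := by
          refine tendsto_measure_iInter_atTop (fun n => measurableSet_Ioi.nullMeasurableSet) ?_
            ⟨0, measure_ne_top _ _⟩
          intro a b hab
          refine Set.Ioi_subset_Ioi ?_
          have hcast : (a:ℝ) ≤ b := by exact_mod_cast hab
          gcongr
        have hin : (⋂ n : ℕ, Set.Ioi (c - 1/(n+1))) = Set.Ici c := by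
          ext x
          simp only [Set.mem_iInter, Set.mem_Ioi, Set.mem_Ici]
          constructor
          · intro hx
            by_contra hcx
            push_neg at hcx
            obtain ⟨n, hn⟩ := exists_nat_one_div_lt (show (0:ℝ) < c - x by linarith)
            have := hx n
            linarith
          · intro hx n
            have h0 : (0:ℝ) < 1/((n:ℝ)+1) := by positivity
            linarith
        rw [hin, hIciIoi] at htend
        have htr : Filter.Tendsto (fun n : ℕ => (ν (Set.Ioi (c - 1/(n+1)))).toReal) Filter.atTop
            (nhds ((ν (Set.Ioi c)).toReal)) :=
          (ENNReal.tendsto_toReal (measure_ne_top _ _)).comp htend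
        refine ge_of_tendsto htr (Filter.Eventually.of_forall fun n => ?_)
        have hnot : c - 1/((n:ℝ)+1) ∉ A := by
          intro hmem
          have := hIci hmem
          simp only [Set.mem_Ici] at this
          have h0 : (0:ℝ) < 1/((n:ℝ)+1) := by positivity
          linarith
        simp only [hA, Set.mem_setOf_eq, not_le] at hnot
        exact hnot.le
      rw [hAIoi, ← ENNReal.ofReal_toReal (measure_ne_top ν (Set.Ioi c)), le_antisymm hub hlb]
    · have hAuniv : A = Set.univ := by
        ext y
        simp only [Set.mem_univ, iff_true]
        rw [not_bddBelow_iff] at hbd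
        obtain ⟨x, hxA, hxy⟩ := hbd y
        exact hup x hxA y hxy.le
      have htend : Filter.Tendsto (fun n : ℕ => ν (Set.Ioi (-(n:ℝ)))) Filter.atTop
          (nhds (ν (⋃ n : ℕ, Set.Ioi (-(n:ℝ))))) := by
        refine tendsto_measure_iUnion_atTop ?_
        intro a b hab
        refine Set.Ioi_subset_Ioi ?_
        have hcast : (a:ℝ) ≤ b := by exact_mod_cast hab
        linarith
      have hun : (⋃ n : ℕ, Set.Ioi (-(n:ℝ))) = Set.univ := by
        ext x
        simp only [Set.mem_iUnion, Set.mem_Ioi, Set.mem_univ, iff_true]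
        obtain ⟨n, hn⟩ := exists_nat_ge (-x)
        exact ⟨n + 1, by push_cast; linarith⟩
      rw [hun, measure_univ] at htend
      have htr : Filter.Tendsto (fun n : ℕ => (ν (Set.Ioi (-(n:ℝ)))).toReal) Filter.atTop
          (nhds 1) := by
        simpa [Function.comp_def] using (ENNReal.tendsto_toReal (by simp)).comp htend
      have h1 : (1:ℝ) ≤ ε := by
        refine le_of_tendsto htr (Filter.Eventually.of_forall fun n => ?_)
        have hmem : (-(n:ℝ)) ∈ A := by rw [hAuniv]; trivial
        simpa only [hA, Set.mem_setOf_eq] using hmem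
      have : ε = 1 := le_antisymm hε.2 h1
      rw [hAuniv, this, measure_univ]
      simp

/-- In a nonincreasing sorted list, the `k`-th entry lies in an upward-closed set `A`
iff at least `k+1` entries lie in `A`. -/
lemma aux_countP_of_sorted {A : Set ℝ} [DecidablePred (· ∈ A)]
    (hup : ∀ x ∈ A, ∀ y, x ≤ y → y ∈ A) {l : List ℝ}
    (hl : List.Pairwise (· ≥ ·) l) {k : ℕ} (hk : k < l.length) :
    l[k] ∈ A ↔ k + 1 ≤ l.countP (fun x => decide (x ∈ A)) := by
  set p : ℝ → Bool := fun x => decide (x ∈ A) with hp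
  constructor
  · intro hmem
    have h1 : l.countP p = (l.take (k+1)).countP p + (l.drop (k+1)).countP p := by
      conv_lhs => rw [← List.take_append_drop (k+1) l]
      exact List.countP_append ..
    have h2 : (l.take (k+1)).countP p = (l.take (k+1)).length := by
      rw [List.countP_eq_length]
      intro a ha
      rw [List.mem_take_iff_getElem] at ha
      obtain ⟨i, hi, rfl⟩ := ha
      have hil : i < l.length := by omega
      have hik : i ≤ k := by omega
      simp only [hp, decide_eq_true_eq]
      rcases eq_or_lt_of_le hik with h | h
      · subst h; exact hmem
      · refine hup _ hmem _ ?_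
        have := hl.rel_get_of_lt (a := ⟨i, hil⟩) (b := ⟨k, hk⟩) (by simpa using h)
        simpa using this
    have h3 : (l.take (k+1)).length = k + 1 := by
      rw [List.length_take]; omega
    omega
  · intro hcount
    by_contra hmem
    have h1 : l.countP p = (l.take k).countP p + (l.drop k).countP p := by
      conv_lhs => rw [← List.take_append_drop k l]
      exact List.countP_append ..
    have h2 : (l.drop k).countP p = 0 := by
      rw [List.countP_eq_zero]
      intro a ha
      simp only [hp, decide_eq_true_eq]
      intro haA
      have hkt : l[k] ∈ l.take (k+1) := by
        rw [List.mem_take_iff_getElem]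
        exact ⟨k, by omega, rfl⟩
      rw [← List.getElem_cons_drop (as := l) (i := k) hk] at ha
      rcases List.mem_cons.mp ha with h | h
      · exact hmem (h ▸ haA)
      · exact hmem (hup a haA _ (hl.rel_of_mem_take_of_mem_drop hkt h))
    have h3 : (l.take k).countP p ≤ k :=
      le_trans (List.countP_le_length (p := p)) (by rw [List.length_take]; omega)
    omega

/-- The number of successes among `N` independent trials is binomially distributed
(upper tail form). -/
lemma aux_binomial_count (ν : Measure ℝ) [IsProbabilityMeasure ν] {A : Set ℝ}
    [DecidablePred (· ∈ A)] (hA : MeasurableSet A) (N k : ℕ) :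
    Measure.pi (fun _ : Fin N => ν)
        {v : Fin N → ℝ | k + 1 ≤ (Finset.univ.filter (fun i => v i ∈ A)).card}
      = ∑ j ∈ Finset.Icc (k+1) N, (N.choose j : ENNReal) * (ν A)^j * (ν Aᶜ)^(N - j) := by
  haveI := Classical.decEq (Finset (Fin N))
  set μ := Measure.pi (fun _ : Fin N => ν) with hμ
  have hSet : {v : Fin N → ℝ | k + 1 ≤ (Finset.univ.filter (fun i => v i ∈ A)).card}
      = ⋃ s ∈ Finset.univ.filter (fun s : Finset (Fin N) => k + 1 ≤ s.card),
          Set.pi Set.univ (fun i => if i ∈ s then A else Aᶜ) := by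
    ext v
    simp only [Set.mem_setOf_eq, Set.mem_iUnion, Finset.mem_filter, Finset.mem_univ, true_and,
      Set.mem_pi, Set.mem_univ, forall_true_left]
    constructor
    · intro hv
      refine ⟨Finset.univ.filter (fun i => v i ∈ A), hv, fun i => ?_⟩
      by_cases h : v i ∈ A <;> simp [h]
    · rintro ⟨s, hs, hvs⟩
      refine le_trans hs (Finset.card_le_card ?_)
      intro i hi
      simp only [Finset.mem_filter, Finset.mem_univ, true_and]
      have := hvs i
      rwa [if_pos hi] at this
  rw [hSet, measure_biUnion_finset]
  · have hprod : ∀ s : Finset (Fin N),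
        μ (Set.pi Set.univ (fun i => if i ∈ s then A else Aᶜ))
          = (ν A)^s.card * (ν Aᶜ)^(N - s.card) := by
      intro s
      rw [hμ, Measure.pi_pi]
      have : ∀ i : Fin N, ν (if i ∈ s then A else Aᶜ) = if i ∈ s then ν A else ν Aᶜ :=
        fun i => apply_ite ν _ _ _
      simp_rw [this]
      rw [Finset.prod_ite, Finset.prod_const, Finset.prod_const]
      congr 1
      · congr 1
        simp
      · congr 1
        have : Finset.univ.filter (fun x : Fin N => x ∉ s) = sᶜ := by
          ext x; simp [Finset.mem_compl]
        rw [this, Finset.card_compl, Fintype.card_fin]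
    simp_rw [hprod]
    have : ∑ s ∈ Finset.univ.filter (fun s : Finset (Fin N) => k + 1 ≤ s.card),
        (ν A)^s.card * (ν Aᶜ)^(N - s.card)
        = ∑ s ∈ (Finset.univ : Finset (Finset (Fin N))),
            (if k + 1 ≤ s.card then (ν A)^s.card * (ν Aᶜ)^(N - s.card) else 0) :=
      (Finset.sum_filter _ _)
    rw [this, ← Finset.powerset_univ, Finset.sum_powerset_apply_card
      (fun m => if k + 1 ≤ m then (ν A)^m * (ν Aᶜ)^(N - m) else 0)]
    rw [Finset.card_univ, Fintype.card_fin]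
    have hIcc : Finset.Icc (k+1) N = (Finset.range (N+1)).filter (fun m => k + 1 ≤ m) := by
      ext m
      simp only [Finset.mem_Icc, Finset.mem_filter, Finset.mem_range, Nat.lt_succ_iff]
      tauto
    rw [hIcc, Finset.sum_filter]
    refine Finset.sum_congr rfl fun m _ => ?_
    by_cases h : k + 1 ≤ m
    · simp [h, smul_eq_mul, mul_assoc]
    · simp [h]
  · intro s hs t ht hst
    rw [Function.onFun, Set.disjoint_left]
    intro v hvs hvt
    obtain ⟨i, hi⟩ := Finset.symmDiff_nonempty.mpr hst
    rw [Finset.mem_symmDiff] at hi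
    simp only [Set.mem_pi, Set.mem_univ, forall_true_left] at hvs hvt
    rcases hi with ⟨his, hit⟩ | ⟨hit, his⟩
    · have h1 := hvs i; have h2 := hvt i
      rw [if_pos his] at h1; rw [if_neg hit] at h2
      exact h2 h1
    · have h1 := hvs i; have h2 := hvt i
      rw [if_neg his] at h1; rw [if_pos hit] at h2
      exact h1 h2
  · intro s hs
    refine MeasurableSet.pi Set.countable_univ fun i _ => ?_
    by_cases h : i ∈ s <;> simp [h, hA, hA.compl]

lemma aux_countP_ofFn_eq {A : Set ℝ} {N : ℕ} (v : Fin N → ℝ) [DecidablePred (· ∈ A)] :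
    (List.ofFn v).countP (fun x => decide (x ∈ A))
      = (Finset.univ.filter (fun i => v i ∈ A)).card := by
  rw [List.ofFn_eq_map, List.countP_map]
  have huniv : (Finset.univ : Finset (Fin N)).val = ↑(List.finRange N) := rfl
  rw [Finset.card_def, Finset.filter_val, huniv, Multiset.filter_coe, Multiset.coe_card,
    ← List.countP_eq_length_filter]
  rfl

/-- For `N` i.i.d. samples from an atomless Borel probability
measure `ν` on `ℝ` and `0 ≤ k < N`, the survival function `F̄(t) = ν((t,∞))`
evaluated at the `(k+1)`-th largest sample satisfies, for every `ε ∈ [0,1]`,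
`ν^N { F̄(V_{(k+1)}) ≤ ε } = Σ_{i=k+1}^{N} C(N,i) ε^i (1−ε)^{N−i}
 = 1 − Σ_{i=0}^{k} C(N,i) ε^i (1−ε)^{N−i}`. -/
theorem survival_of_order_statistic_law (ν : Measure ℝ) [IsProbabilityMeasure ν]
    (hatom : ∀ t : ℝ, ν {t} = 0) (N k : ℕ) (hN : 1 ≤ N) (hk : k < N)
    (ε : ℝ) (hε : ε ∈ Set.Icc (0 : ℝ) 1) :
    Measure.pi (fun _ : Fin N => ν)
        {v : Fin N → ℝ | (ν (Set.Ioi (kthLargest v (k + 1)))).toReal ≤ ε}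
      = ENNReal.ofReal
          (∑ i ∈ Finset.Icc (k + 1) N, (N.choose i : ℝ) * ε ^ i * (1 - ε) ^ (N - i)) ∧
    Measure.pi (fun _ : Fin N => ν)
        {v : Fin N → ℝ | (ν (Set.Ioi (kthLargest v (k + 1)))).toReal ≤ ε}
      = ENNReal.ofReal
          (1 - ∑ i ∈ Finset.range (k + 1), (N.choose i : ℝ) * ε ^ i * (1 - ε) ^ (N - i)) := by
  classical
  set A := {x : ℝ | (ν (Set.Ioi x)).toReal ≤ ε} with hA
  have hup : ∀ x ∈ A, ∀ y, x ≤ y → y ∈ A := by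
    intro x hx y hxy
    simp only [hA, Set.mem_setOf_eq] at hx ⊢
    exact le_trans
      (ENNReal.toReal_mono (measure_ne_top ν _) (measure_mono (Set.Ioi_subset_Ioi hxy))) hx
  have hmeas : MeasurableSet A :=
    Set.OrdConnected.measurableSet ⟨fun x hx y _ z hz => hup x hx z hz.1⟩
  have hevent : {v : Fin N → ℝ | (ν (Set.Ioi (kthLargest v (k + 1)))).toReal ≤ ε}
      = {v : Fin N → ℝ | k + 1 ≤ (Finset.univ.filter (fun i => v i ∈ A)).card} := by
    ext v
    simp only [Set.mem_setOf_eq]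
    set l := List.insertionSort (· ≥ ·) (List.ofFn v) with hl
    have hlen : l.length = N := by
      rw [hl, List.length_insertionSort, List.length_ofFn]
    have hkl : k < l.length := by omega
    have hget : kthLargest v (k + 1) = l[k] := by
      rw [kthLargest, Nat.add_sub_cancel, ← hl, List.getD_eq_getElem l 0 hkl]
    have hsorted : List.Pairwise (· ≥ ·) l := List.pairwise_insertionSort _ _
    have hperm : l.Perm (List.ofFn v) := List.perm_insertionSort _ _
    rw [hget]
    rw [show ((ν (Set.Ioi l[k])).toReal ≤ ε) = (l[k] ∈ A) from rfl,
      aux_countP_of_sorted hup hsorted hkl, hperm.countP_eq, aux_countP_ofFn_eq]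
  have hνA : ν A = ENNReal.ofReal ε := aux_measure_A ν hatom hε
  have hνAc : ν Aᶜ = ENNReal.ofReal (1 - ε) := by
    rw [prob_compl_eq_one_sub hmeas, hνA, ENNReal.ofReal_sub _ hε.1, ENNReal.ofReal_one]
  have hmain : Measure.pi (fun _ : Fin N => ν)
        {v : Fin N → ℝ | (ν (Set.Ioi (kthLargest v (k + 1)))).toReal ≤ ε}
      = ENNReal.ofReal
          (∑ i ∈ Finset.Icc (k + 1) N, (N.choose i : ℝ) * ε ^ i * (1 - ε) ^ (N - i)) := by
    rw [hevent, aux_binomial_count ν hmeas N k, hνA, hνAc]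
    rw [ENNReal.ofReal_sum_of_nonneg]
    · refine Finset.sum_congr rfl fun j hj => ?_
      have h1 : (0:ℝ) ≤ 1 - ε := by linarith [hε.2]
      have h0 : (0:ℝ) ≤ ε := hε.1
      rw [ENNReal.ofReal_mul (by positivity), ENNReal.ofReal_mul (by positivity),
        ENNReal.ofReal_pow hε.1, ENNReal.ofReal_pow h1, ENNReal.ofReal_natCast]
    · intro j hj
      have h1 : (0:ℝ) ≤ 1 - ε := by linarith [hε.2]
      have h0 := hε.1
      positivity
  refine ⟨hmain, ?_⟩
  rw [hmain]
  congr 1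
  -- real binomial identity
  have htot : ∑ j ∈ Finset.range (N+1), (N.choose j : ℝ) * ε^j * (1-ε)^(N-j) = 1 := by
    have h := add_pow ε (1-ε) N
    have h2 : ε + (1 - ε) = 1 := by ring
    rw [h2, one_pow] at h
    refine Eq.trans (Finset.sum_congr rfl fun j _ => ?_) h.symm
    ring
  have hsplit : (∑ j ∈ Finset.range (k+1), (N.choose j : ℝ) * ε^j * (1-ε)^(N-j))
      + ∑ j ∈ Finset.Icc (k+1) N, (N.choose j : ℝ) * ε^j * (1-ε)^(N-j)
      = ∑ j ∈ Finset.range (N+1), (N.choose j : ℝ) * ε^j * (1-ε)^(N-j) := by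
    simp only [Finset.range_eq_Ico]
    rw [← Finset.Ico_add_one_right_eq_Icc (k+1) N]
    exact Finset.sum_Ico_consecutive _ (by omega) (by omega)
  linarith
end

section
/- (Theorem 1, PAC probability intervals.) Let μ, x̂, R, c, g and the non-accumulation assumption be as described, let p* = μ{ w ∈ ℝⁿ : x̂ + w ∈ R } be the true transition probability, fix β ∈ (0,1) and N ≥ 1, and on the sample space ((ℝⁿ)^N, μ^N) let K = |{ i : x̂ + w_i ∉ R }| be the (random) number of samples whose successor state lies outside R. Then μ^N { (w₁, …, w_N) : p̲(K) ≤ p* ≤ p̄(K) } ≥ 1 − β. -/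
open MeasureTheory

/-- `F_{N,k}(p) = Σ_{i=0}^{k} C(N,i) (1−p)^i p^{N−i}`. -/
def binomCDF (N k : ℕ) (p : ℝ) : ℝ :=
  ∑ i ∈ Finset.range (k + 1), (N.choose i : ℝ) * (1 - p) ^ i * p ^ (N - i)

section Aux

lemma binomCDF_hasDerivAt (N k : ℕ) (hk : k < N) (p : ℝ) :
    HasDerivAt (binomCDF N k)
      ((N.choose (k+1) * (k+1) : ℝ) * (1-p)^k * p^(N-(k+1))) p := by
  have key : ∀ i ∈ Finset.range (k+1),
      HasDerivAt (fun p : ℝ => (N.choose i : ℝ) * (1 - p) ^ i * p ^ (N - i))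
        ((fun j : ℕ => (N.choose j * j : ℝ) * (1-p)^(j-1) * p^(N-j)) (i+1)
          - (fun j : ℕ => (N.choose j * j : ℝ) * (1-p)^(j-1) * p^(N-j)) i) p := by
    intro i hi
    have hiN : i < N := lt_of_lt_of_le (Finset.mem_range.mp hi) hk
    have h1 : HasDerivAt (fun p : ℝ => (1 - p) ^ i)
        ((i : ℝ) * (1 - p) ^ (i - 1) * (-1)) p :=
      ((hasDerivAt_id p).const_sub 1).pow i
    have h2 : HasDerivAt (fun p : ℝ => p ^ (N - i))
        (((N - i : ℕ) : ℝ) * p ^ (N - i - 1)) p := hasDerivAt_pow (N - i) p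
    have := ((h1.mul h2).const_mul (N.choose i : ℝ))
    convert this using 1
    · rfl
    · rfl
    · funext y; rw [Pi.mul_apply]; ring
    have hch : (N.choose (i+1) * (i+1) : ℝ) = (N.choose i : ℝ) * ((N : ℝ) - i) := by
      have := Nat.choose_succ_right_eq N i
      have hcast : ((N.choose (i+1) * (i+1) : ℕ) : ℝ) = ((N.choose i * (N - i) : ℕ) : ℝ) := by
        exact_mod_cast congrArg (Nat.cast : ℕ → ℝ) this
      push_cast [Nat.cast_sub hiN.le] at hcast
      linarith [hcast]
    simp only [Nat.add_sub_cancel]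
    push_cast
    rw [hch]
    have hsub : N - (i+1) = N - i - 1 := by omega
    rw [hsub]
    rcases Nat.eq_zero_or_pos i with h0 | h0
    · subst h0; simp
    · have hsplit : (1 - p) ^ i = (1 - p) ^ (i - 1) * (1 - p) := by
        rw [← pow_succ]; congr 1; omega
      have hsub2 : N - i = (N - i - 1) + 1 := by omega
      have hp : p ^ (N - i) = p ^ (N - i - 1) * p := by
        conv_lhs => rw [hsub2]
        rw [pow_succ]
      rw [hsplit, hp]
      push_cast [Nat.cast_sub hiN.le]
      ring
  have hsum := HasDerivAt.fun_sum key
  have hfun : binomCDF N k = fun p => ∑ i ∈ Finset.range (k+1),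
      (N.choose i : ℝ) * (1 - p) ^ i * p ^ (N - i) := rfl
  rw [hfun]
  convert hsum using 1
  · rfl
  · rfl
  rw [Finset.sum_range_sub (f := fun j : ℕ => (N.choose j * j : ℝ) * (1-p)^(j-1) * p^(N-j))]
  simp

lemma binomCDF_monotoneOn (N k : ℕ) (hk : k < N) :
    MonotoneOn (binomCDF N k) (Set.Icc (0:ℝ) 1) := by
  have hderiv : ∀ p : ℝ, HasDerivAt (binomCDF N k)
      ((N.choose (k+1) * (k+1) : ℝ) * (1-p)^k * p^(N-(k+1))) p := binomCDF_hasDerivAt N k hk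
  refine monotoneOn_of_deriv_nonneg (convex_Icc 0 1) ?_ ?_ ?_
  · exact fun x _ => ((hderiv x).continuousAt.continuousWithinAt)
  · exact fun x _ => ((hderiv x).differentiableAt.differentiableWithinAt)
  · intro x hx
    rw [interior_Icc] at hx
    rw [(hderiv x).deriv]
    have h1 : (0:ℝ) ≤ 1 - x := by linarith [hx.2]
    have h2 : (0:ℝ) ≤ x := hx.1.le
    exact mul_nonneg (mul_nonneg (by positivity) (pow_nonneg h1 _)) (pow_nonneg h2 _)

open scoped Classical

lemma filter_eq_box {X : Type*} (A : Set X) (N : ℕ) (S : Finset (Fin N)) :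
    {w : Fin N → X | (Finset.univ.filter fun i => w i ∉ A) = S}
      = Set.pi Set.univ (fun i => if i ∈ S then Aᶜ else A) := by
  ext w
  simp only [Set.mem_setOf_eq, Set.mem_pi, Set.mem_univ, forall_true_left, Finset.ext_iff,
    Finset.mem_filter, Finset.mem_univ, true_and]
  constructor
  · intro h i
    have := h i
    by_cases hi : i ∈ S <;> simp [hi] at this ⊢ <;> tauto
  · intro h i
    have := h i
    by_cases hi : i ∈ S <;> simp [hi] at this ⊢ <;> tauto

lemma box_measurable {X : Type*} [MeasurableSpace X] (A : Set X) (hA : MeasurableSet A)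
    (N : ℕ) (S : Finset (Fin N)) :
    MeasurableSet {w : Fin N → X | (Finset.univ.filter fun i => w i ∉ A) = S} := by
  rw [filter_eq_box]
  exact MeasurableSet.univ_pi fun i => by
    by_cases hi : i ∈ S <;> simp only [hi, if_true, if_false]
    exacts [hA.compl, hA]

lemma count_eq_biUnion {X : Type*} (A : Set X) (N k : ℕ) :
    {w : Fin N → X | (Finset.univ.filter fun i => w i ∉ A).card = k}
      = ⋃ S ∈ Finset.powersetCard k (Finset.univ : Finset (Fin N)),
          {w : Fin N → X | (Finset.univ.filter fun i => w i ∉ A) = S} := by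
  ext w
  simp only [Set.mem_setOf_eq, Set.mem_iUnion, Finset.mem_powersetCard_univ]
  constructor
  · intro h; exact ⟨_, h, rfl⟩
  · rintro ⟨S, hS, h⟩; rw [h]; exact hS

lemma count_measurable {X : Type*} [MeasurableSpace X] (A : Set X) (hA : MeasurableSet A)
    (N k : ℕ) :
    MeasurableSet {w : Fin N → X | (Finset.univ.filter fun i => w i ∉ A).card = k} := by
  rw [count_eq_biUnion]
  exact MeasurableSet.biUnion (Finset.powersetCard k Finset.univ).countable_toSet
    fun S _ => box_measurable A hA N S

lemma pi_box_measure {X : Type*} [MeasurableSpace X] (μ : Measure X) [IsProbabilityMeasure μ]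
    (A : Set X) (N : ℕ) (S : Finset (Fin N)) :
    Measure.pi (fun _ : Fin N => μ)
        {w : Fin N → X | (Finset.univ.filter fun i => w i ∉ A) = S}
      = (μ Aᶜ) ^ S.card * (μ A) ^ (N - S.card) := by
  rw [filter_eq_box, Measure.pi_pi]
  have e1 : (Finset.univ.filter (· ∈ S)) = S := by ext i; simp
  have e2 : (Finset.univ.filter fun i => i ∉ S) = Sᶜ := by ext i; simp
  calc ∏ i, μ (if i ∈ S then Aᶜ else A)
      = ∏ i, (if i ∈ S then μ Aᶜ else μ A) := by
        refine Finset.prod_congr rfl fun i _ => ?_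
        by_cases hi : i ∈ S <;> simp [hi]
    _ = (∏ i ∈ Finset.univ.filter (· ∈ S), μ Aᶜ)
          * ∏ i ∈ Finset.univ.filter fun i => i ∉ S, μ A := Finset.prod_ite _ _
    _ = (μ Aᶜ) ^ S.card * (μ A) ^ (N - S.card) := by
        rw [e1, e2, Finset.prod_const, Finset.prod_const, Finset.card_compl,
          Fintype.card_fin]

lemma pi_count_measure {X : Type*} [MeasurableSpace X] (μ : Measure X) [IsProbabilityMeasure μ]
    (A : Set X) (hA : MeasurableSet A) (N k : ℕ) :
    Measure.pi (fun _ : Fin N => μ)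
        {w : Fin N → X | (Finset.univ.filter fun i => w i ∉ A).card = k}
      = (N.choose k : ENNReal) * (μ Aᶜ) ^ k * (μ A) ^ (N - k) := by
  rw [count_eq_biUnion, measure_biUnion_finset ?_ (fun S _ => box_measurable A hA N S)]
  · rw [Finset.sum_congr rfl (fun S hS => ?_), Finset.sum_const, Finset.card_powersetCard,
      Finset.card_univ, Fintype.card_fin, nsmul_eq_mul, mul_assoc]
    rw [pi_box_measure μ A N S, (Finset.mem_powersetCard_univ.mp hS)]
  · intro S hS T hT hST
    refine Set.disjoint_left.mpr fun w hw hw' => hST ?_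
    have h1 : (Finset.univ.filter fun i => w i ∉ A) = S := hw
    have h2 : (Finset.univ.filter fun i => w i ∉ A) = T := hw'
    exact h1.symm.trans h2

end Aux

section Abstract
open scoped Classical

lemma pac_abstract {X : Type*} [MeasurableSpace X] (μ : Measure X) [IsProbabilityMeasure μ]
    (A : Set X) (hA : MeasurableSet A)
    (β : ℝ) (hβ0 : 0 < β) (hβ1 : β < 1) (N : ℕ) (hN : 1 ≤ N)
    (plow pbar : ℕ → ℝ)
    (hplowN : plow N = 0)
    (hplow : ∀ K < N, plow K ∈ Set.Ioo (0 : ℝ) 1 ∧ binomCDF N K (plow K) = β / (2 * N))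
    (hpbar0 : pbar 0 = 1)
    (hpbar : ∀ K, 1 ≤ K → K ≤ N →
      pbar K ∈ Set.Ioo (0 : ℝ) 1 ∧ binomCDF N (K - 1) (pbar K) = 1 - β / (2 * N))
    (D : ∀ (w : Fin N → X) (i : Fin N), Decidable (w i ∉ A)) :
    ENNReal.ofReal (1 - β) ≤
      Measure.pi (fun _ : Fin N => μ)
        {w : Fin N → X |
          plow ((@Finset.filter _ (fun i => w i ∉ A) (D w) Finset.univ).card)
            ≤ (μ A).toReal ∧
          (μ A).toReal
            ≤ pbar ((@Finset.filter _ (fun i => w i ∉ A) (D w) Finset.univ).card)} := by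
  have hD : ∀ w : Fin N → X, @Finset.filter _ (fun i => w i ∉ A) (D w) Finset.univ
      = @Finset.filter _ (fun i => w i ∉ A)
          (fun i => @instDecidableNot (w i ∈ A) (Classical.propDecidable _)) Finset.univ :=
    fun w => @Finset.filter_congr _ _ _ (D w)
      (fun i => @instDecidableNot (w i ∈ A) (Classical.propDecidable _))
      Finset.univ (fun _ _ => Iff.rfl)
  simp only [hD]
  clear hD D
  set ν := Measure.pi (fun _ : Fin N => μ) with hν
  set p : ℝ := (μ A).toReal with hpdef
  have hp0 : 0 ≤ p := ENNReal.toReal_nonneg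
  have hp1 : p ≤ 1 := by
    have := prob_le_one (μ := μ) (s := A)
    simpa [hpdef] using ENNReal.toReal_mono ENNReal.one_ne_top this
  have hμA : μ A = ENNReal.ofReal p := (ENNReal.ofReal_toReal (measure_ne_top μ A)).symm
  have hAc : μ Aᶜ = ENNReal.ofReal (1 - p) := by
    rw [measure_compl hA (measure_ne_top μ A), measure_univ, hμA,
      ENNReal.ofReal_sub 1 hp0, ENNReal.ofReal_one]
  have hNR : (0:ℝ) < N := by exact_mod_cast hN
  have hN1 : (1:ℝ) ≤ N := by exact_mod_cast hN
  have hEk : ∀ k, ν {w : Fin N → X | (Finset.univ.filter fun i => w i ∉ A).card = k}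
      = ENNReal.ofReal ((N.choose k : ℝ) * (1-p)^k * p^(N-k)) := by
    intro k
    have h1p : (0:ℝ) ≤ 1 - p := by linarith
    rw [hν, pi_count_measure μ A hA N k, hμA, hAc,
      ENNReal.ofReal_mul (mul_nonneg (Nat.cast_nonneg _) (pow_nonneg h1p k)),
      ENNReal.ofReal_mul (Nat.cast_nonneg _),
      ← ENNReal.ofReal_pow h1p, ← ENNReal.ofReal_pow hp0,
      ENNReal.ofReal_natCast]
  have hLesplit : ∀ k, {w : Fin N → X |
        (Finset.univ.filter fun i => w i ∉ A).card ≤ k}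
      = ⋃ i ∈ Finset.range (k+1),
          {w : Fin N → X | (Finset.univ.filter fun i => w i ∉ A).card = i} := by
    intro k
    ext w
    simp [Nat.lt_succ_iff]
  have hLeMeas : ∀ k, MeasurableSet {w : Fin N → X |
      (Finset.univ.filter fun i => w i ∉ A).card ≤ k} := by
    intro k
    rw [hLesplit k]
    exact MeasurableSet.biUnion (Finset.range (k+1)).countable_toSet
      fun i _ => count_measurable A hA N i
  have hCDF : ∀ k, ν {w : Fin N → X |
        (Finset.univ.filter fun i => w i ∉ A).card ≤ k}
      = ENNReal.ofReal (binomCDF N k p) := by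
    intro k
    rw [hLesplit k, measure_biUnion_finset ?_ (fun i _ => count_measurable A hA N i)]
    · rw [Finset.sum_congr rfl fun i _ => hEk i,
        ← ENNReal.ofReal_sum_of_nonneg (fun i _ => by
          have h1 : (0:ℝ) ≤ 1 - p := by linarith
          exact mul_nonneg (mul_nonneg (Nat.cast_nonneg _) (pow_nonneg h1 _))
            (pow_nonneg hp0 _))]
      rfl
    · intro i hi j hj hij
      refine Set.disjoint_left.mpr fun w hw hw' => hij ?_
      have h1 : (Finset.univ.filter fun l => w l ∉ A).card = i := hw
      have h2 : (Finset.univ.filter fun l => w l ∉ A).card = j := hw'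
      exact h1.symm.trans h2
  have hb2N1 : β / (2*N) ≤ 1 := by
    rw [div_le_one (by positivity)]
    nlinarith
  have hlowB : ∀ k ≤ N, p < plow k →
      ν {w : Fin N → X | (Finset.univ.filter fun i => w i ∉ A).card = k}
        ≤ ENNReal.ofReal (β / (2*N)) := by
    intro k hkN hlt
    have hkN' : k < N := by
      rcases lt_or_eq_of_le hkN with h | h
      · exact h
      · exfalso; rw [h, hplowN] at hlt; linarith
    obtain ⟨hmem, heq⟩ := hplow k hkN'
    calc ν {w : Fin N → X | (Finset.univ.filter fun i => w i ∉ A).card = k}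
        ≤ ν {w : Fin N → X | (Finset.univ.filter fun i => w i ∉ A).card ≤ k} :=
          measure_mono (fun w hw => le_of_eq hw)
      _ = ENNReal.ofReal (binomCDF N k p) := hCDF k
      _ ≤ ENNReal.ofReal (binomCDF N k (plow k)) := ENNReal.ofReal_le_ofReal
          (binomCDF_monotoneOn N k hkN' ⟨hp0, hp1⟩ ⟨hmem.1.le, hmem.2.le⟩ hlt.le)
      _ = ENNReal.ofReal (β / (2*N)) := by rw [heq]
  have hhighB : ∀ k ≤ N, pbar k < p →
      ν {w : Fin N → X | (Finset.univ.filter fun i => w i ∉ A).card = k}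
        ≤ ENNReal.ofReal (β / (2*N)) := by
    intro k hkN hlt
    have hk1 : 1 ≤ k := by
      rcases Nat.eq_zero_or_pos k with h | h
      · exfalso; rw [h, hpbar0] at hlt; linarith
      · exact h
    obtain ⟨hmem, heq⟩ := hpbar k hk1 hkN
    have hks : k - 1 < N := by omega
    have hsub : ν {w : Fin N → X | (Finset.univ.filter fun i => w i ∉ A).card = k}
        ≤ ν ({w : Fin N → X |
            (Finset.univ.filter fun i => w i ∉ A).card ≤ k - 1}ᶜ) := by
      refine measure_mono fun w hw => ?_
      have hw' : (Finset.univ.filter fun i => w i ∉ A).card = k := hw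
      simp only [Set.mem_compl_iff, Set.mem_setOf_eq, hw']
      omega
    have hcomp : ν ({w : Fin N → X |
          (Finset.univ.filter fun i => w i ∉ A).card ≤ k - 1}ᶜ)
        = 1 - ENNReal.ofReal (binomCDF N (k-1) p) := by
      rw [measure_compl (hLeMeas (k-1)) (measure_ne_top _ _), measure_univ, hCDF]
    calc ν {w : Fin N → X | (Finset.univ.filter fun i => w i ∉ A).card = k}
        ≤ 1 - ENNReal.ofReal (binomCDF N (k-1) p) := hsub.trans hcomp.le
      _ ≤ 1 - ENNReal.ofReal (binomCDF N (k-1) (pbar k)) :=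
          tsub_le_tsub_left (ENNReal.ofReal_le_ofReal
            (binomCDF_monotoneOn N (k-1) hks ⟨hmem.1.le, hmem.2.le⟩ ⟨hp0, hp1⟩ hlt.le)) 1
      _ = ENNReal.ofReal (β / (2*N)) := by
          rw [heq]
          have h1 : 0 ≤ 1 - β/(2*N) := by linarith
          rw [← ENNReal.ofReal_one, ← ENNReal.ofReal_sub _ h1]
          congr 1; ring
  have hKle : ∀ w : Fin N → X,
      (Finset.univ.filter fun i => w i ∉ A).card ≤ N := fun w =>
    le_trans (Finset.card_filter_le _ _) (by simp)
  set S : Set (Fin N → X) := {w : Fin N → X |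
      plow ((Finset.univ.filter fun i => w i ∉ A).card) ≤ p ∧
      p ≤ pbar ((Finset.univ.filter fun i => w i ∉ A).card)} with hSdef
  have hSrep : S = ⋃ k ∈ (Finset.range (N+1)).filter (fun k => plow k ≤ p ∧ p ≤ pbar k),
      {w : Fin N → X | (Finset.univ.filter fun i => w i ∉ A).card = k} := by
    ext w
    simp only [hSdef, Set.mem_setOf_eq, Set.mem_iUnion, Finset.mem_filter, Finset.mem_range]
    constructor
    · intro h
      exact ⟨_, ⟨Nat.lt_succ_of_le (hKle w), h⟩, rfl⟩
    · rintro ⟨k, ⟨_, h⟩, hk⟩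
      have hk' : (Finset.univ.filter fun i => w i ∉ A).card = k := hk
      rw [hk']; exact h
  have hSmeas : MeasurableSet S := by
    rw [hSrep]
    exact MeasurableSet.biUnion (Finset.countable_toSet _)
      fun k _ => count_measurable A hA N k
  set Bl := (Finset.range (N+1)).filter (fun k => p < plow k) with hBl
  set Bh := (Finset.range (N+1)).filter (fun k => pbar k < p) with hBh
  have hcomplsub : Sᶜ ⊆
      (⋃ k ∈ Bl, {w : Fin N → X | (Finset.univ.filter fun i => w i ∉ A).card = k})
      ∪ ⋃ k ∈ Bh, {w : Fin N → X |
          (Finset.univ.filter fun i => w i ∉ A).card = k} := by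
    intro w hw
    have hw' : ¬ (plow ((Finset.univ.filter fun i => w i ∉ A).card) ≤ p ∧
        p ≤ pbar ((Finset.univ.filter fun i => w i ∉ A).card)) := hw
    rcases lt_or_ge p (plow ((Finset.univ.filter fun i => w i ∉ A).card)) with h | h
    · left
      simp only [Set.mem_iUnion, Finset.mem_filter, Finset.mem_range, hBl]
      exact ⟨_, ⟨Nat.lt_succ_of_le (hKle w), h⟩, rfl⟩
    · right
      have h2 : pbar ((Finset.univ.filter fun i => w i ∉ A).card) < p := by
        by_contra h2
        exact hw' ⟨h, le_of_not_gt h2⟩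
      simp only [Set.mem_iUnion, Finset.mem_filter, Finset.mem_range, hBh]
      exact ⟨_, ⟨Nat.lt_succ_of_le (hKle w), h2⟩, rfl⟩
  have hNmul : (N : ENNReal) * ENNReal.ofReal (β/(2*N)) = ENNReal.ofReal (β/2) := by
    rw [← ENNReal.ofReal_natCast N, ← ENNReal.ofReal_mul (Nat.cast_nonneg N)]
    congr 1
    field_simp
  have hunionB : ∀ (B : Finset ℕ), B.card ≤ N →
      (∀ k ∈ B, ν {w : Fin N → X |
          (Finset.univ.filter fun i => w i ∉ A).card = k} ≤ ENNReal.ofReal (β/(2*N))) →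
      ν (⋃ k ∈ B, {w : Fin N → X |
          (Finset.univ.filter fun i => w i ∉ A).card = k}) ≤ ENNReal.ofReal (β/2) := by
    intro B hcard hbound
    calc ν (⋃ k ∈ B, {w : Fin N → X |
            (Finset.univ.filter fun i => w i ∉ A).card = k})
        ≤ ∑ k ∈ B, ν {w : Fin N → X |
            (Finset.univ.filter fun i => w i ∉ A).card = k} := measure_biUnion_finset_le B _
      _ ≤ ∑ _k ∈ B, ENNReal.ofReal (β/(2*N)) := Finset.sum_le_sum hbound
      _ = B.card * ENNReal.ofReal (β/(2*N)) := by rw [Finset.sum_const, nsmul_eq_mul]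
      _ ≤ N * ENNReal.ofReal (β/(2*N)) := by
          exact mul_le_mul_left (by exact_mod_cast Nat.cast_le.mpr hcard) _
      _ = ENNReal.ofReal (β/2) := hNmul
  have hBlcard : Bl.card ≤ N := by
    have hsub : Bl ⊆ Finset.range N := by
      intro k hk
      simp only [hBl, Finset.mem_filter, Finset.mem_range] at hk
      rcases hk with ⟨hk1, hk2⟩
      rcases Nat.lt_succ_iff_lt_or_eq.mp hk1 with h | h
      · exact Finset.mem_range.mpr h
      · exfalso; rw [h, hplowN] at hk2; linarith
    simpa using Finset.card_le_card hsub
  have hBhcard : Bh.card ≤ N := by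
    have hsub : Bh ⊆ Finset.Icc 1 N := by
      intro k hk
      simp only [hBh, Finset.mem_filter, Finset.mem_range] at hk
      rcases hk with ⟨hk1, hk2⟩
      refine Finset.mem_Icc.mpr ⟨?_, by omega⟩
      rcases Nat.eq_zero_or_pos k with h | h
      · exfalso; rw [h, hpbar0] at hk2; linarith
      · exact h
    have := Finset.card_le_card hsub
    simpa [Nat.card_Icc] using this
  have hcompl : ν Sᶜ ≤ ENNReal.ofReal β := by
    calc ν Sᶜ ≤ ν ((⋃ k ∈ Bl, {w : Fin N → X |
            (Finset.univ.filter fun i => w i ∉ A).card = k})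
          ∪ ⋃ k ∈ Bh, {w : Fin N → X |
            (Finset.univ.filter fun i => w i ∉ A).card = k}) := measure_mono hcomplsub
      _ ≤ _ + _ := measure_union_le _ _
      _ ≤ ENNReal.ofReal (β/2) + ENNReal.ofReal (β/2) := by
          refine add_le_add (hunionB Bl hBlcard ?_) (hunionB Bh hBhcard ?_)
          · intro k hk
            simp only [hBl, Finset.mem_filter, Finset.mem_range] at hk
            exact hlowB k (by omega) hk.2
          · intro k hk
            simp only [hBh, Finset.mem_filter, Finset.mem_range] at hk
            exact hhighB k (by omega) hk.2
      _ = ENNReal.ofReal β := by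
          rw [← ENNReal.ofReal_add (by positivity) (by positivity)]
          norm_num
  have hsum1 : ν S + ν Sᶜ = 1 := by
    haveI : IsProbabilityMeasure ν := by rw [hν]; infer_instance
    rw [measure_add_measure_compl hSmeas, measure_univ]
  calc ENNReal.ofReal (1 - β) = 1 - ENNReal.ofReal β := by
        rw [ENNReal.ofReal_sub 1 hβ0.le, ENNReal.ofReal_one]
    _ ≤ 1 - ν Sᶜ := tsub_le_tsub_left hcompl 1
    _ ≤ ν S := by
        rw [← hsum1]
        exact tsub_le_iff_right.mpr le_rfl

end Abstract

open scoped Classical in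
/-- **Theorem 1, PAC probability intervals.**
With `p* = μ{w : x̂ + w ∈ R}` the true transition probability, `K` the random
number of samples whose successor state lies outside `R`, and `p̲, p̄` the
interval bounds characterized by `p̲(N) = 0`, `F_{N,K}(p̲(K)) = β/(2N)` for
`K < N`, `p̄(0) = 1`, and `F_{N,K−1}(p̄(K)) = 1 − β/(2N)` for `1 ≤ K ≤ N`, we have
`μ^N { p̲(K) ≤ p* ≤ p̄(K) } ≥ 1 − β`. -/
theorem pac_probability_interval {n m : ℕ} (hn : 1 ≤ n) (hm : 1 ≤ m)
    (M : Matrix (Fin m) (Fin n) ℝ) (b : Fin m → ℝ) (c : Fin n → ℝ)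
    (hc : ∀ j, M.mulVec c j < b j)
    (μ : Measure (Fin n → ℝ)) [IsProbabilityMeasure μ]
    (xhat : Fin n → ℝ)
    (hacc : ∀ lam : ℝ,
      μ {w : Fin n → ℝ | (Finset.univ.sup' ⟨⟨0, hm⟩, Finset.mem_univ _⟩
          fun j => M.mulVec (xhat + w - c) j / (b j - M.mulVec c j)) = lam} = 0)
    (β : ℝ) (hβ : β ∈ Set.Ioo (0 : ℝ) 1) (N : ℕ) (hN : 1 ≤ N)
    (plow pbar : ℕ → ℝ)
    (hplowN : plow N = 0)
    (hplow : ∀ K < N, plow K ∈ Set.Ioo (0 : ℝ) 1 ∧ binomCDF N K (plow K) = β / (2 * N))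
    (hpbar0 : pbar 0 = 1)
    (hpbar : ∀ K, 1 ≤ K → K ≤ N →
      pbar K ∈ Set.Ioo (0 : ℝ) 1 ∧ binomCDF N (K - 1) (pbar K) = 1 - β / (2 * N)) :
    ENNReal.ofReal (1 - β) ≤
      Measure.pi (fun _ : Fin N => μ)
        {w : Fin N → (Fin n → ℝ) |
          plow ((Finset.univ.filter fun i : Fin N =>
              ¬ ∀ j, M.mulVec (xhat + w i) j ≤ b j).card)
            ≤ (μ {w' : Fin n → ℝ | ∀ j, M.mulVec (xhat + w') j ≤ b j}).toReal ∧
          (μ {w' : Fin n → ℝ | ∀ j, M.mulVec (xhat + w') j ≤ b j}).toReal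
            ≤ pbar ((Finset.univ.filter fun i : Fin N =>
              ¬ ∀ j, M.mulVec (xhat + w i) j ≤ b j).card)} := by
  obtain ⟨hβ0, hβ1⟩ := hβ
  have hA : MeasurableSet {w' : Fin n → ℝ | ∀ j, M.mulVec (xhat + w') j ≤ b j} := by
    have hrep : {w' : Fin n → ℝ | ∀ j, M.mulVec (xhat + w') j ≤ b j}
        = ⋂ j, {w' : Fin n → ℝ | M.mulVec (xhat + w') j ≤ b j} := by
      ext w'; simp [Set.mem_iInter]
    rw [hrep]
    refine MeasurableSet.iInter fun j => ?_
    have hmeas : Measurable fun w' : Fin n → ℝ => M.mulVec (xhat + w') j := by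
      have hfun : (fun w' : Fin n → ℝ => M.mulVec (xhat + w') j)
          = fun w' => ∑ l, M j l * (xhat l + w' l) := rfl
      rw [hfun]
      exact Finset.measurable_sum _ fun l _ =>
        ((measurable_const.add (measurable_pi_apply l)).const_mul _)
    exact measurableSet_le hmeas measurable_const
  exact pac_abstract μ {w' : Fin n → ℝ | ∀ j, M.mulVec (xhat + w') j ≤ b j} hA
    β hβ0 hβ1 N hN plow pbar hplowN hplow hpbar0 hpbar (fun w i => inferInstance)
end

section
/- (Scalar form of the PAC interval theorem.) Let ν be an atomless Borel probability measure on ℝ, fix a threshold c ∈ ℝ, let p* = ν((−∞, c]), fix β ∈ (0,1) and N ≥ 1, and on (ℝ^N, ν^N) let K = |{ i : v_i > c }| be the (random) number of coordinates exceeding c. Then ν^N { (v₁, …, v_N) : p̲(K) ≤ p* ≤ p̄(K) } ≥ 1 − β. -/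
open MeasureTheory
open scoped ENNReal

namespace PacAux

variable (ν : Measure ℝ) [IsProbabilityMeasure ν] (c : ℝ) (N : ℕ)

lemma set_eq (S : Finset (Fin N)) :
    {v : Fin N → ℝ | Finset.univ.filter (fun i => c < v i) = S} =
      Set.pi Set.univ (fun i => if i ∈ S then Set.Ioi c else Set.Iic c) := by
  ext v
  simp only [Set.mem_setOf_eq, Finset.ext_iff, Finset.mem_filter, Finset.mem_univ, true_and,
    Set.mem_pi, Set.mem_univ, forall_true_left]
  refine forall_congr' fun i => ?_
  by_cases h : i ∈ S <;> simp [h, Set.mem_Ioi, Set.mem_Iic, not_lt]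

lemma meas_set_eq (S : Finset (Fin N)) :
    MeasurableSet {v : Fin N → ℝ | Finset.univ.filter (fun i => c < v i) = S} := by
  rw [set_eq]
  exact MeasurableSet.univ_pi fun i => by
    split <;> [exact measurableSet_Ioi; exact measurableSet_Iic]

lemma measure_piSet (S : Finset (Fin N)) :
    Measure.pi (fun _ : Fin N => ν)
      {v : Fin N → ℝ | Finset.univ.filter (fun i => c < v i) = S} =
      ν (Set.Ioi c) ^ S.card * ν (Set.Iic c) ^ (N - S.card) := by
  rw [set_eq, Measure.pi_pi]
  have h1 : Finset.univ.filter (fun i => i ∈ S) = S := by ext i; simp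
  have h2 : (Finset.univ.filter (fun i => ¬ i ∈ S)).card = N - S.card := by
    rw [Finset.filter_not, Finset.card_sdiff_of_subset]
    · simp [h1]
    · simp [h1, Finset.subset_univ]
  simp only [apply_ite ν]
  rw [Finset.prod_ite, Finset.prod_const, Finset.prod_const, h1, h2]

lemma measure_count (k : ℕ) :
    Measure.pi (fun _ : Fin N => ν)
      {v : Fin N → ℝ | (Finset.univ.filter (fun i => c < v i)).card = k} =
      (N.choose k : ℝ≥0∞) * ν (Set.Ioi c) ^ k * ν (Set.Iic c) ^ (N - k) := by
  have hset : {v : Fin N → ℝ | (Finset.univ.filter (fun i => c < v i)).card = k} =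
      ⋃ S ∈ Finset.powersetCard k (Finset.univ : Finset (Fin N)),
        {v | Finset.univ.filter (fun i => c < v i) = S} := by
    ext v
    simp only [Set.mem_setOf_eq, Set.mem_iUnion, Finset.mem_powersetCard_univ]
    constructor
    · intro h; exact ⟨_, h, rfl⟩
    · rintro ⟨S, hS, h⟩; rw [h]; exact hS
  rw [hset, measure_biUnion_finset]
  · rw [Finset.sum_congr rfl (fun S hS => ?_), Finset.sum_const,
      Finset.card_powersetCard, Finset.card_univ, Fintype.card_fin, nsmul_eq_mul, mul_assoc]
    rw [measure_piSet, Finset.mem_powersetCard_univ.1 hS]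
  · intro S hS T hT hST
    simp only [Set.disjoint_left, Set.mem_setOf_eq]
    intro v hv hv'
    exact hST (hv ▸ hv')
  · exact fun S _ => meas_set_eq c N S

lemma meas_count (k : ℕ) :
    MeasurableSet {v : Fin N → ℝ | (Finset.univ.filter (fun i => c < v i)).card = k} := by
  have hset : {v : Fin N → ℝ | (Finset.univ.filter (fun i => c < v i)).card = k} =
      ⋃ S ∈ Finset.powersetCard k (Finset.univ : Finset (Fin N)),
        {v | Finset.univ.filter (fun i => c < v i) = S} := by
    ext v
    simp only [Set.mem_setOf_eq, Set.mem_iUnion, Finset.mem_powersetCard_univ]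
    exact ⟨fun h => ⟨_, h, rfl⟩, fun ⟨S, hS, h⟩ => h ▸ hS⟩
  rw [hset]
  exact (Finset.powersetCard k Finset.univ).measurableSet_biUnion
    (fun S _ => meas_set_eq c N S)

lemma meas_cum (k : ℕ) :
    MeasurableSet {v : Fin N → ℝ | (Finset.univ.filter (fun i => c < v i)).card ≤ k} := by
  have : {v : Fin N → ℝ | (Finset.univ.filter (fun i => c < v i)).card ≤ k} =
      ⋃ i ∈ Finset.range (k + 1), {v | (Finset.univ.filter (fun j => c < v j)).card = i} := by
    ext v; simp [Nat.lt_succ_iff]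
  rw [this]
  exact (Finset.range (k+1)).measurableSet_biUnion (fun i _ => meas_count c N i)

lemma measure_cum (k : ℕ) :
    Measure.pi (fun _ : Fin N => ν)
      {v : Fin N → ℝ | (Finset.univ.filter (fun i => c < v i)).card ≤ k} =
      ∑ i ∈ Finset.range (k + 1),
        (N.choose i : ℝ≥0∞) * ν (Set.Ioi c) ^ i * ν (Set.Iic c) ^ (N - i) := by
  have hset : {v : Fin N → ℝ | (Finset.univ.filter (fun i => c < v i)).card ≤ k} =
      ⋃ i ∈ Finset.range (k + 1), {v | (Finset.univ.filter (fun j => c < v j)).card = i} := by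
    ext v; simp [Nat.lt_succ_iff]
  rw [hset, measure_biUnion_finset]
  · exact Finset.sum_congr rfl fun i _ => measure_count ν c N i
  · intro i hi j hj hij
    simp only [Set.disjoint_left, Set.mem_setOf_eq]
    intro v hv hv'
    exact hij (hv ▸ hv')
  · exact fun i _ => meas_count c N i

lemma Ioi_eq : ν (Set.Ioi c) = 1 - ν (Set.Iic c) := by
  rw [← Set.compl_Iic, prob_compl_eq_one_sub measurableSet_Iic]

lemma toReal_Ioi : (ν (Set.Ioi c)).toReal = 1 - (ν (Set.Iic c)).toReal := by
  rw [Ioi_eq, ENNReal.toReal_sub_of_le prob_le_one (by simp), ENNReal.toReal_one]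

lemma toReal_cum (k : ℕ) :
    (Measure.pi (fun _ : Fin N => ν)
      {v : Fin N → ℝ | (Finset.univ.filter (fun i => c < v i)).card ≤ k}).toReal =
      binomCDF N k (ν (Set.Iic c)).toReal := by
  have hfin : ∀ i ∈ Finset.range (k + 1),
      (N.choose i : ℝ≥0∞) * ν (Set.Ioi c) ^ i * ν (Set.Iic c) ^ (N - i) ≠ ⊤ := fun i _ =>
    ENNReal.mul_ne_top (ENNReal.mul_ne_top (ENNReal.natCast_ne_top _)
      (ENNReal.pow_ne_top (measure_ne_top _ _))) (ENNReal.pow_ne_top (measure_ne_top _ _))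
  rw [measure_cum, ENNReal.toReal_sum hfin]
  unfold binomCDF
  refine Finset.sum_congr rfl fun i _ => ?_
  rw [ENNReal.toReal_mul, ENNReal.toReal_mul, ENNReal.toReal_pow, ENNReal.toReal_pow,
    toReal_Ioi]
  simp

noncomputable def unif : Measure ℝ := volume.restrict (Set.Ioc (0:ℝ) 1)

instance : IsProbabilityMeasure unif := ⟨by simp [unif, Real.volume_Ioc]⟩

lemma unif_Iic {t : ℝ} (h0 : 0 ≤ t) (h1 : t ≤ 1) : (unif (Set.Iic t)).toReal = t := by
  rw [unif, Measure.restrict_apply measurableSet_Iic]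
  have : Set.Iic t ∩ Set.Ioc (0:ℝ) 1 = Set.Ioc 0 t := by
    ext x
    simp only [Set.mem_inter_iff, Set.mem_Iic, Set.mem_Ioc]
    exact ⟨fun ⟨hx, hx0, _⟩ => ⟨hx0, hx⟩, fun ⟨hx0, hx⟩ => ⟨hx, hx0, hx.trans h1⟩⟩
  rw [this, Real.volume_Ioc, ENNReal.toReal_ofReal (by linarith)]
  ring

lemma binomCDF_eq (N k : ℕ) {t : ℝ} (h0 : 0 ≤ t) (h1 : t ≤ 1) :
    binomCDF N k t = (Measure.pi (fun _ : Fin N => unif)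
      {v : Fin N → ℝ | (Finset.univ.filter (fun i => t < v i)).card ≤ k}).toReal := by
  rw [toReal_cum unif t N k, unif_Iic h0 h1]

lemma binomCDF_mono (N k : ℕ) {p q : ℝ} (hp : 0 ≤ p) (hpq : p ≤ q) (hq : q ≤ 1) :
    binomCDF N k p ≤ binomCDF N k q := by
  rw [binomCDF_eq N k hp (hpq.trans hq), binomCDF_eq N k (hp.trans hpq) hq]
  refine ENNReal.toReal_mono (measure_ne_top _ _) (measure_mono fun v hv => ?_)
  simp only [Set.mem_setOf_eq] at *
  refine le_trans (Finset.card_le_card fun i hi => ?_) hv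
  simp only [Finset.mem_filter, Finset.mem_univ, true_and] at *
  exact lt_of_le_of_lt hpq hi

end PacAux


/-- **scalar form of the PAC interval theorem.**
For an atomless Borel probability measure `ν` on `ℝ`, a threshold `c`,
`p* = ν((−∞, c])`, and `K` the random number of coordinates exceeding `c`,
with `p̲, p̄` characterized by `p̲(N) = 0`, `F_{N,K}(p̲(K)) = β/(2N)` for `K < N`,
`p̄(0) = 1`, and `F_{N,K−1}(p̄(K)) = 1 − β/(2N)` for `1 ≤ K ≤ N`, we have
`ν^N { p̲(K) ≤ p* ≤ p̄(K) } ≥ 1 − β`. -/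
theorem pac_probability_interval_scalar (ν : Measure ℝ) [IsProbabilityMeasure ν]
    (hatom : ∀ t : ℝ, ν {t} = 0) (c : ℝ)
    (β : ℝ) (hβ : β ∈ Set.Ioo (0 : ℝ) 1) (N : ℕ) (hN : 1 ≤ N)
    (plow pbar : ℕ → ℝ)
    (hplowN : plow N = 0)
    (hplow : ∀ K < N, plow K ∈ Set.Ioo (0 : ℝ) 1 ∧ binomCDF N K (plow K) = β / (2 * N))
    (hpbar0 : pbar 0 = 1)
    (hpbar : ∀ K, 1 ≤ K → K ≤ N →
      pbar K ∈ Set.Ioo (0 : ℝ) 1 ∧ binomCDF N (K - 1) (pbar K) = 1 - β / (2 * N)) :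
    ENNReal.ofReal (1 - β) ≤
      Measure.pi (fun _ : Fin N => ν)
        {v : Fin N → ℝ |
          plow ((Finset.univ.filter fun i : Fin N => c < v i).card)
            ≤ (ν (Set.Iic c)).toReal ∧
          (ν (Set.Iic c)).toReal
            ≤ pbar ((Finset.univ.filter fun i : Fin N => c < v i).card)} := by
  obtain ⟨hβ0, hβ1⟩ := hβ
  set P := Measure.pi (fun _ : Fin N => ν) with hP
  set pr := (ν (Set.Iic c)).toReal with hprdef
  have hpr0 : 0 ≤ pr := ENNReal.toReal_nonneg
  have hpr1 : pr ≤ 1 := by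
    rw [hprdef, ← ENNReal.toReal_one]
    exact ENNReal.toReal_mono ENNReal.one_ne_top prob_le_one
  have hNR : (0:ℝ) < N := by exact_mod_cast hN
  have hx0 : 0 ≤ β / (2 * N) := by positivity
  have hN1 : (1:ℝ) ≤ N := by exact_mod_cast hN
  have hx1 : β / (2 * N) ≤ 1 := by
    rw [div_le_one (by linarith)]
    linarith
  set K : (Fin N → ℝ) → ℕ := fun v => (Finset.univ.filter fun i : Fin N => c < v i).card
    with hK
  have hKle : ∀ v, K v ≤ N := fun v => le_trans (Finset.card_filter_le _ _) (by simp)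
  have hcum : ∀ k, P {v | K v ≤ k} = ENNReal.ofReal (binomCDF N k pr) := by
    intro k
    rw [← PacAux.toReal_cum ν c N k, ENNReal.ofReal_toReal (measure_ne_top _ _)]
  have hkey1 : ∀ k ∈ Finset.range (N+1), pr < plow k →
      P {v | K v = k} ≤ ENNReal.ofReal (β / (2 * N)) := by
    intro k hk hlt
    have hkN : k ≠ N := fun h => by rw [h, hplowN] at hlt; linarith
    have hkN' : k < N := lt_of_le_of_ne (Nat.lt_succ_iff.1 (Finset.mem_range.1 hk)) hkN
    obtain ⟨⟨hl0, hl1⟩, heq⟩ := hplow k hkN'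
    have hb : binomCDF N k pr ≤ β / (2 * N) :=
      heq ▸ PacAux.binomCDF_mono N k hpr0 hlt.le hl1.le
    calc P {v | K v = k} ≤ P {v | K v ≤ k} :=
          measure_mono fun v hv => le_of_eq hv
      _ = ENNReal.ofReal (binomCDF N k pr) := hcum k
      _ ≤ ENNReal.ofReal (β / (2 * N)) := ENNReal.ofReal_le_ofReal hb
  have hkey2 : ∀ k ∈ Finset.range (N+1), pbar k < pr →
      P {v | K v = k} ≤ ENNReal.ofReal (β / (2 * N)) := by
    intro k hk hlt
    have hk0 : k ≠ 0 := fun h => by rw [h, hpbar0] at hlt; linarith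
    have hk1 : 1 ≤ k := Nat.one_le_iff_ne_zero.2 hk0
    obtain ⟨⟨hl0, hl1⟩, heq⟩ := hpbar k hk1 (Nat.lt_succ_iff.1 (Finset.mem_range.1 hk))
    have hb : 1 - β / (2 * N) ≤ binomCDF N (k-1) pr :=
      heq ▸ PacAux.binomCDF_mono N (k-1) hl0.le hlt.le hpr1
    calc P {v | K v = k} ≤ P ({v | K v ≤ k - 1}ᶜ) := by
          refine measure_mono fun v hv h => ?_
          simp only [Set.mem_setOf_eq] at hv h
          omega
      _ = 1 - P {v | K v ≤ k - 1} := prob_compl_eq_one_sub (PacAux.meas_cum c N (k-1))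
      _ ≤ 1 - ENNReal.ofReal (1 - β / (2 * N)) := by
          refine tsub_le_tsub_left ?_ _
          rw [hcum]
          exact ENNReal.ofReal_le_ofReal hb
      _ = ENNReal.ofReal (β / (2 * N)) := by
          rw [← ENNReal.ofReal_one, ← ENNReal.ofReal_sub _ (by linarith)]
          norm_num
  classical
  have hbad : ∀ (T : Finset ℕ) (B : Set (Fin N → ℝ)), T ⊆ Finset.range (N+1) → T.card ≤ N →
      (∀ k ∈ T, P {v | K v = k} ≤ ENNReal.ofReal (β / (2 * N))) →
      (B ⊆ ⋃ k ∈ T, {v | K v = k}) → P B ≤ ENNReal.ofReal (β / 2) := by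
    intro T B hTsub hTcard hTk hBsub
    calc P B ≤ P (⋃ k ∈ T, {v | K v = k}) := measure_mono hBsub
      _ ≤ ∑ k ∈ T, P {v | K v = k} := measure_biUnion_finset_le _ _
      _ ≤ ∑ _k ∈ T, ENNReal.ofReal (β / (2 * N)) := Finset.sum_le_sum hTk
      _ = (T.card : ℝ≥0∞) * ENNReal.ofReal (β / (2 * N)) := by
          rw [Finset.sum_const, nsmul_eq_mul]
      _ ≤ (N : ℝ≥0∞) * ENNReal.ofReal (β / (2 * N)) := by
          exact mul_le_mul_left (by exact_mod_cast hTcard) _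
      _ = ENNReal.ofReal (N * (β / (2 * N))) := by
          rw [← ENNReal.ofReal_natCast, ← ENNReal.ofReal_mul (Nat.cast_nonneg N)]
      _ = ENNReal.ofReal (β / 2) := by
          congr 1
          field_simp
  set T1 : Finset ℕ := (Finset.range (N+1)).filter (fun k => pr < plow k) with hT1
  set T2 : Finset ℕ := (Finset.range (N+1)).filter (fun k => pbar k < pr) with hT2
  have hbad1 : P {v | pr < plow (K v)} ≤ ENNReal.ofReal (β / 2) := by
    refine hbad T1 _ (Finset.filter_subset _ _) ?_ ?_ ?_
    · have hsub : T1 ⊆ (Finset.range (N+1)).erase N := by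
        intro k hk
        rw [hT1, Finset.mem_filter] at hk
        refine Finset.mem_erase.2 ⟨fun h => ?_, hk.1⟩
        rw [h, hplowN] at hk
        linarith [hk.2]
      calc T1.card ≤ ((Finset.range (N+1)).erase N).card := Finset.card_le_card hsub
        _ = N := by rw [Finset.card_erase_of_mem (by simp), Finset.card_range]; omega
    · intro k hk
      rw [hT1, Finset.mem_filter] at hk
      exact hkey1 k hk.1 hk.2
    · intro v hv
      simp only [Set.mem_setOf_eq] at hv
      have hm : K v ∈ T1 := by
        rw [hT1, Finset.mem_filter, Finset.mem_range]
        exact ⟨Nat.lt_succ_of_le (hKle v), hv⟩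
      exact Set.mem_biUnion hm rfl
  have hbad2 : P {v | pbar (K v) < pr} ≤ ENNReal.ofReal (β / 2) := by
    refine hbad T2 _ (Finset.filter_subset _ _) ?_ ?_ ?_
    · have hsub : T2 ⊆ (Finset.range (N+1)).erase 0 := by
        intro k hk
        rw [hT2, Finset.mem_filter] at hk
        refine Finset.mem_erase.2 ⟨fun h => ?_, hk.1⟩
        rw [h, hpbar0] at hk
        linarith [hk.2]
      calc T2.card ≤ ((Finset.range (N+1)).erase 0).card := Finset.card_le_card hsub
        _ = N := by rw [Finset.card_erase_of_mem (by simp), Finset.card_range]; omega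
    · intro k hk
      rw [hT2, Finset.mem_filter] at hk
      exact hkey2 k hk.1 hk.2
    · intro v hv
      simp only [Set.mem_setOf_eq] at hv
      have hm : K v ∈ T2 := by
        rw [hT2, Finset.mem_filter, Finset.mem_range]
        exact ⟨Nat.lt_succ_of_le (hKle v), hv⟩
      exact Set.mem_biUnion hm rfl
  set G : Set (Fin N → ℝ) := {v | plow (K v) ≤ pr ∧ pr ≤ pbar (K v)} with hG
  have hGc : Gᶜ = {v | pr < plow (K v)} ∪ {v | pbar (K v) < pr} := by
    ext v
    simp only [hG, Set.mem_compl_iff, Set.mem_setOf_eq, Set.mem_union, not_and_or, not_le]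
  have hone : (1 : ℝ≥0∞) ≤ P G + ENNReal.ofReal β := by
    calc (1 : ℝ≥0∞) = P Set.univ := measure_univ.symm
      _ = P (G ∪ Gᶜ) := by rw [Set.union_compl_self]
      _ ≤ P G + P Gᶜ := measure_union_le _ _
      _ ≤ P G + (ENNReal.ofReal (β/2) + ENNReal.ofReal (β/2)) := by
          refine add_le_add_right ?_ _
          rw [hGc]
          exact le_trans (measure_union_le _ _) (add_le_add hbad1 hbad2)
      _ = P G + ENNReal.ofReal β := by
          rw [← ENNReal.ofReal_add (by linarith) (by linarith)]
          norm_num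
  calc ENNReal.ofReal (1 - β) = 1 - ENNReal.ofReal β := by
        rw [← ENNReal.ofReal_one, ← ENNReal.ofReal_sub _ hβ0.le]
      _ ≤ P G := tsub_le_iff_right.2 hone
end
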